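/- arXiv:2401.15588 — 3 statements merged into one kernel-verified Lean document; each statement's English description precedes it below -/
import Mathlib

section
/- Let g be a Schwartz function on ℝ whose Fourier transform ĝ is compactly supported, and for σ ∈ ℝ define g_σ(t) := ∫ ĝ(u) e^{2πiu(t+iσ)} du. Then each g_σ is a Schwartz function and g_σ → g in the Schwartz space topology as σ → 0. -/
/-!
Write `φ = ĝ`. Then `g_σ` is the inverse Fourier transform of `u ↦ φ u * exp (-2πσu)`, which is a
Schwartz function because `φ` is smooth with compact support. If `supp φ ⊆ [-R, R]`, every
derivative of `u ↦ exp (c u) - 1` is `O(|c|)` on `[-R, R]`, so by the Leibniz rule every Schwartz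
seminorm of `φ · (exp (c ·) - 1)` is `O(|c|)`. Hence `φ · exp (c ·) → φ` in Schwartz space as
`c → 0`, and continuity of the inverse Fourier transform on Schwartz space gives `g_σ → 𝓕⁻ φ = g`.
-/

open Complex Filter Real SchwartzMap FourierTransform Topology
open scoped ContDiff

theorem contDiff_cexp_const_mul_ofReal (c : ℂ) : ContDiff ℝ ∞ (fun u : ℝ => cexp (c * u)) :=
  (contDiff_const.mul ofRealCLM.contDiff).cexp

theorem iteratedDeriv_cexp_const_mul_ofReal (c : ℂ) (n : ℕ) :
    iteratedDeriv n (fun u : ℝ => cexp (c * u)) = fun u : ℝ => c ^ n * cexp (c * u) := by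
  induction n with
  | zero => simp
  | succ n ih =>
    ext x
    have hx : HasDerivAt (fun u : ℝ => cexp (c * u)) (cexp (c * x) * c) x := by
      simpa using ((hasDerivAt_id (x : ℂ)).const_mul c).cexp.comp_ofReal
    rw [iteratedDeriv_succ, ih, (hx.const_mul (c ^ n)).deriv]
    ring

theorem norm_iteratedFDeriv_cexp_mul_sub_one_le {c : ℂ} {R : ℝ} (hR : 1 ≤ R) (hc : ‖c‖ * R ≤ 1)
    (j : ℕ) {x : ℝ} (hx : |x| ≤ R) :
    ‖iteratedFDeriv ℝ j (fun u : ℝ => cexp (c * u) - 1) x‖ ≤ 3 * ‖c‖ * R := by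
  have hcx : ‖c * x‖ ≤ ‖c‖ * R := by
    rw [norm_mul, norm_real, Real.norm_eq_abs]
    gcongr
  rw [norm_iteratedFDeriv_eq_norm_iteratedDeriv]
  rcases j with _ | k
  · calc ‖iteratedDeriv 0 (fun u : ℝ => cexp (c * u) - 1) x‖
        = ‖cexp (c * x) - 1‖ := by rw [iteratedDeriv_zero]
      _ ≤ 2 * ‖c * x‖ := norm_exp_sub_one_le (hcx.trans hc)
      _ ≤ 3 * ‖c‖ * R := by nlinarith [norm_nonneg c, norm_nonneg (c * x)]
  · have hc1 : ‖c‖ ≤ 1 := by nlinarith [norm_nonneg c]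
    have hexp : ‖cexp (c * x)‖ ≤ 3 :=
      calc ‖cexp (c * x)‖ = Real.exp (c * x).re := norm_exp _
        _ ≤ Real.exp 1 := Real.exp_le_exp.mpr ((re_le_norm _).trans (hcx.trans hc))
        _ ≤ 3 := Real.exp_one_lt_d9.le.trans (by norm_num)
    rw [iteratedDeriv_succ', deriv_sub_const_fun, ← iteratedDeriv_succ',
      iteratedDeriv_cexp_const_mul_ofReal, norm_mul, norm_pow]
    calc ‖c‖ ^ (k + 1) * ‖cexp (c * x)‖ ≤ ‖c‖ * 3 :=
          mul_le_mul (pow_le_of_le_one (norm_nonneg c) hc1 k.succ_ne_zero) hexp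
            (norm_nonneg _) (norm_nonneg c)
      _ ≤ 3 * ‖c‖ * R := by nlinarith [norm_nonneg c]

namespace SchwartzMap

theorem seminorm_le_of_eq_mul_of_tsupport_subset
    {E 𝔸 : Type*} [NormedAddCommGroup E] [NormedSpace ℝ E] [NormedRing 𝔸] [NormedAlgebra ℝ 𝔸]
    {ψ φ : 𝓢(E, 𝔸)} {m : E → 𝔸} (hm : ContDiff ℝ ∞ m) (hψ : ⇑ψ = fun x => φ x * m x)
    {R ε : ℝ} (hR : 0 ≤ R) (hε : 0 ≤ ε) (hφ : tsupport φ ⊆ Metric.closedBall 0 R) (k n : ℕ)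
    (hmε : ∀ j ≤ n, ∀ x ∈ Metric.closedBall 0 R, ‖iteratedFDeriv ℝ j m x‖ ≤ ε) :
    SchwartzMap.seminorm ℝ k n ψ ≤
      R ^ k * (∑ j ∈ Finset.range (n + 1), (n.choose j : ℝ) * SchwartzMap.seminorm ℝ 0 j φ) * ε := by
  refine seminorm_le_bound ℝ k n ψ (by positivity) fun x => ?_
  by_cases hx : x ∈ Metric.closedBall 0 R
  · have hxR : ‖x‖ ^ k ≤ R ^ k := by
      gcongr
      simpa using hx
    have hLeibniz : ‖iteratedFDeriv ℝ n ψ x‖ ≤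
        (∑ j ∈ Finset.range (n + 1), (n.choose j : ℝ) * SchwartzMap.seminorm ℝ 0 j φ) * ε := by
      rw [hψ, Finset.sum_mul]
      refine (norm_iteratedFDeriv_mul_le (φ.smooth ⊤) hm x (mod_cast le_top)).trans
        (Finset.sum_le_sum fun j _ => ?_)
      rw [mul_assoc, mul_assoc]
      gcongr
      · exact norm_iteratedFDeriv_le_seminorm ℝ φ j x
      · exact hmε (n - j) (Nat.sub_le n j) x hx
    calc ‖x‖ ^ k * ‖iteratedFDeriv ℝ n ψ x‖ ≤ R ^ k * ((∑ j ∈ Finset.range (n + 1),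
          (n.choose j : ℝ) * SchwartzMap.seminorm ℝ 0 j φ) * ε) := by gcongr
      _ = _ := (mul_assoc _ _ _).symm
  · have hψx : iteratedFDeriv ℝ n ψ x = 0 := by
      refine image_eq_zero_of_notMem_tsupport fun hxψ => hx (hφ ?_)
      rw [hψ] at hxψ
      exact tsupport_mul_subset_left (tsupport_iteratedFDeriv_subset n hxψ)
    rw [hψx, norm_zero, mul_zero]
    positivity

section MulCexp

variable (φ : 𝓢(ℝ, ℂ)) (hφ : HasCompactSupport φ)

noncomputable def mulCexp (c : ℂ) : 𝓢(ℝ, ℂ) :=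
  (hφ.mul_right (f' := fun u : ℝ => cexp (c * u))).toSchwartzMap
    ((φ.smooth ⊤).mul (contDiff_cexp_const_mul_ofReal c))

theorem mulCexp_apply (c : ℂ) (u : ℝ) : φ.mulCexp hφ c u = φ u * cexp (c * u) := rfl

theorem fourierInv_mulCexp_apply (z : ℂ) (t : ℝ) :
    𝓕⁻ (φ.mulCexp hφ (2 * π * I * z)) t = ∫ u : ℝ, φ u * cexp (2 * π * I * u * (t + z)) := by
  rw [fourierInv_coe, Real.fourierInv_eq']
  congr 1 with u
  rw [mulCexp_apply, smul_eq_mul, mul_left_comm, ← Complex.exp_add, real_inner_comm,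
    RCLike.inner_apply, conj_trivial]
  push_cast
  ring_nf

theorem tendsto_mulCexp_nhds_zero : Tendsto (φ.mulCexp hφ) (𝓝 0) (𝓝 φ) := by
  obtain ⟨r, hr⟩ := hφ.isBounded.subset_closedBall 0
  set R := max r 1
  have hR : 1 ≤ R := le_max_right r 1
  have hφR : tsupport φ ⊆ Metric.closedBall 0 R :=
    hr.trans (Metric.closedBall_subset_closedBall (le_max_left r 1))
  rw [(schwartz_withSeminorms ℝ ℝ ℂ).tendsto_nhds]
  rintro ⟨k, n⟩ ε hε
  set B := R ^ k * (∑ j ∈ Finset.range (n + 1), (n.choose j : ℝ) * SchwartzMap.seminorm ℝ 0 j φ) *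
    (3 * R)
  have hbound : ∀ᶠ c in 𝓝 (0 : ℂ), SchwartzMap.seminorm ℝ k n (φ.mulCexp hφ c - φ) ≤ B * ‖c‖ := by
    filter_upwards [Metric.closedBall_mem_nhds (0 : ℂ) (inv_pos.mpr (zero_lt_one.trans_le hR))]
      with c hc
    have hcR : ‖c‖ * R ≤ 1 :=
      calc ‖c‖ * R ≤ R⁻¹ * R := by gcongr; simpa using hc
        _ = 1 := inv_mul_cancel₀ (by positivity)
    have hdiff : ⇑(φ.mulCexp hφ c - φ) = fun u => φ u * (cexp (c * u) - 1) := by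
      ext u
      simp only [sub_apply, mulCexp_apply]
      ring
    refine (seminorm_le_of_eq_mul_of_tsupport_subset (ε := 3 * ‖c‖ * R)
      ((contDiff_cexp_const_mul_ofReal c).sub contDiff_const) hdiff (by positivity)
      (by positivity) hφR k n fun j _ x hx => ?_).trans_eq (by ring)
    exact norm_iteratedFDeriv_cexp_mul_sub_one_le hR hcR j (by simpa using hx)
  have hlim : Tendsto (fun c : ℂ => B * ‖c‖) (𝓝 0) (𝓝 0) := by
    simpa using tendsto_norm_zero.const_mul B
  filter_upwards [hbound, hlim.eventually (gt_mem_nhds hε)] with c hc hcε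
  exact hc.trans_lt hcε

end MulCexp

end SchwartzMap

/-- If `g` is a Schwartz function whose Fourier transform is compactly supported, then the
vertical translates `g_σ(t) = ∫ ĝ(u) e^{2πiu(t+iσ)} du` are Schwartz functions and
`g_σ → g` in the Schwartz space topology as `σ → 0`. -/
theorem vertical_translates_tendsto
    (g : SchwartzMap ℝ ℂ)
    (hsupp : HasCompactSupport ((SchwartzMap.fourierTransformCLM ℂ g : SchwartzMap ℝ ℂ) : ℝ → ℂ)) :
    ∃ gs : ℝ → SchwartzMap ℝ ℂ,
      (∀ (σ : ℝ) (t : ℝ), gs σ t = ∫ u : ℝ,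
        (SchwartzMap.fourierTransformCLM ℂ g) u *
          Complex.exp (2 * Real.pi * I * u * ((t : ℂ) + I * σ))) ∧
      Tendsto gs (nhds 0) (nhds g) := by
  set φ := SchwartzMap.fourierTransformCLM ℂ g
  refine ⟨fun σ => 𝓕⁻ (φ.mulCexp hsupp (2 * π * I * (I * σ))), fun σ t =>
    φ.fourierInv_mulCexp_apply hsupp _ t, ?_⟩
  have hc : Tendsto (fun σ : ℝ => 2 * π * I * (I * σ)) (𝓝 0) (𝓝 0) := by
    simpa using ((continuous_const.mul continuous_ofReal).tendsto (0 : ℝ)).const_mul (2 * π * I)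
  rw [← show 𝓕⁻ φ = g from fourierInv_fourier_eq g]
  exact (continuous_fourierInv.tendsto φ).comp ((φ.tendsto_mulCexp_nhds_zero hsupp).comp hc)
end

section
/- Let X be a Banach space of functions on ℝ in which the Schwartz space S(ℝ) embeds continuously and densely, and suppose that every α ∈ X* whose distributional Fourier transform is supported in ℤ is zero. Then the image under the Fourier transform of the space I_0(ℝ) (Schwartz functions vanishing to infinite order at all integers) is dense in X. -/
/-!
By Hahn–Banach it suffices that every `α ∈ X*` annihilating `j (𝓕 I₀)` vanishes. A Schwartz
function whose support avoids `ℤ` vanishes to infinite order at every integer, so it lies in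
`I₀`; hence `α ∘ j ∘ 𝓕`, the Fourier transform of `α` as a distribution, vanishes off `ℤ`, and
the hypothesis on `X` forces `α = 0`.
-/

/-- A tempered distribution `α` vanishes on an open set `U` if it kills every Schwartz
function whose (closed) support is contained in `U`. -/
def DistVanishesOn (α : SchwartzMap ℝ ℂ →L[ℂ] ℂ) (U : Set ℝ) : Prop :=
  ∀ φ : SchwartzMap ℝ ℂ, tsupport (φ : ℝ → ℂ) ⊆ U → α φ = 0

/-- The support of a tempered distribution. -/
def DistSupport (α : SchwartzMap ℝ ℂ →L[ℂ] ℂ) : Set ℝ :=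
  {x : ℝ | ∀ U : Set ℝ, IsOpen U → x ∈ U → ¬ DistVanishesOn α U}

/-- The space `I₀(ℝ)` of Schwartz functions vanishing to infinite order at every integer. -/
def I0 : Set (SchwartzMap ℝ ℂ) :=
  {f : SchwartzMap ℝ ℂ | ∀ (n : ℤ) (j : ℕ), iteratedDeriv j (f : ℝ → ℂ) (n : ℝ) = 0}

/-- A point outside the closure of `M` is detected by a functional on the normed quotient
by that closure, which pulls back to a functional annihilating `M`. -/
theorem Submodule.dense_of_forall_dual_eq_zero {𝕜 E : Type*} [RCLike 𝕜] [NormedAddCommGroup E]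
    [NormedSpace 𝕜 E] (M : Submodule 𝕜 E)
    (h : ∀ f : StrongDual 𝕜 E, (∀ x ∈ M, f x = 0) → f = 0) : Dense (M : Set E) := by
  let N := M.topologicalClosure
  have : IsClosed (N : Set E) := M.isClosed_topologicalClosure
  refine dense_iff_closure_eq.2 (Set.eq_univ_of_forall fun x => ?_)
  by_contra hx
  have hqx : N.mkQL x ≠ 0 := fun h0 => hx ((Submodule.Quotient.mk_eq_zero N).1 h0)
  obtain ⟨g, hg⟩ := SeparatingDual.exists_ne_zero (R := 𝕜) hqx
  have hvanish : ∀ y ∈ M, (g ∘L N.mkQL) y = 0 := fun y hy => by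
    simp [(Submodule.Quotient.mk_eq_zero N).2 (M.le_topologicalClosure hy)]
  exact hg (by simpa using congrArg (· x) (h _ hvanish))

theorem iteratedDeriv_eq_zero_of_notMem_tsupport {𝕜 F : Type*} [NontriviallyNormedField 𝕜]
    [NormedAddCommGroup F] [NormedSpace 𝕜 F] {f : 𝕜 → F} {x : 𝕜} (hx : x ∉ tsupport f)
    (k : ℕ) : iteratedDeriv k f x = 0 := by
  rw [iteratedDeriv_eq_iteratedFDeriv,
    Function.notMem_support.1 fun h => hx (support_iteratedFDeriv_subset k h)]
  rfl

def I0Submodule : Submodule ℂ (SchwartzMap ℝ ℂ) where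
  carrier := I0
  zero_mem' n k := by simp
  add_mem' {f g} hf hg n k := by
    rw [FunLike.coe_add, iteratedDeriv_add (f.smooth k).contDiffAt (g.smooth k).contDiffAt,
      hf n k, hg n k, add_zero]
  smul_mem' c f hf n k := by
    rw [FunLike.coe_smul, iteratedDeriv_const_smul_field, hf n k, smul_zero]

theorem mem_I0_of_tsupport_subset_compl {φ : SchwartzMap ℝ ℂ}
    (hφ : tsupport (φ : ℝ → ℂ) ⊆ (Set.range (Int.cast : ℤ → ℝ))ᶜ) : φ ∈ I0 :=
  fun n => iteratedDeriv_eq_zero_of_notMem_tsupport fun hn => hφ hn ⟨n, rfl⟩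

theorem distSupport_subset_of_distVanishesOn_compl {α : SchwartzMap ℝ ℂ →L[ℂ] ℂ} {C : Set ℝ}
    (hC : IsClosed C) (hα : DistVanishesOn α Cᶜ) : DistSupport α ⊆ C :=
  fun _ hx => by_contra fun hxC => hx Cᶜ hC.isOpen_compl hxC hα

theorem fourier_I0_dense_general
    (X : Type*) [NormedAddCommGroup X] [NormedSpace ℂ X]
    (j : SchwartzMap ℝ ℂ →L[ℂ] X)
    (hX : ∀ α : X →L[ℂ] ℂ,
      DistSupport ((α.comp j).comp
          (SchwartzMap.fourierTransformCLM ℂ : SchwartzMap ℝ ℂ →L[ℂ] SchwartzMap ℝ ℂ)) ⊆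
        Set.range (Int.cast : ℤ → ℝ) → α = 0) :
    Dense (⇑j '' (⇑(SchwartzMap.fourierTransformCLM ℂ : SchwartzMap ℝ ℂ →L[ℂ] SchwartzMap ℝ ℂ)
      '' I0)) := by
  set F := (SchwartzMap.fourierTransformCLM ℂ : SchwartzMap ℝ ℂ →L[ℂ] SchwartzMap ℝ ℂ)
  have himage : ⇑j '' (⇑F '' I0) =
      ((I0Submodule.map F.toLinearMap).map j.toLinearMap : Set X) := rfl
  rw [himage]
  refine Submodule.dense_of_forall_dual_eq_zero _ fun α hα => hX α ?_
  refine distSupport_subset_of_distVanishesOn_compl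
    Int.isClosedEmbedding_coe_real.isClosed_range fun φ hφ => ?_
  exact hα _ ⟨F φ, ⟨φ, mem_I0_of_tsupport_subset_compl hφ, rfl⟩, rfl⟩

/-- Let `X` be a Banach space in which the Schwartz space embeds continuously, densely
and injectively via `j`. If every `α ∈ X*` whose distributional Fourier transform is
supported in `ℤ` vanishes, then the image under the Fourier transform of `I₀(ℝ)` is
dense in `X`. -/
theorem fourier_I0_dense
    (X : Type*) [NormedAddCommGroup X] [NormedSpace ℂ X] [CompleteSpace X]
    (j : SchwartzMap ℝ ℂ →L[ℂ] X) (hinj : Function.Injective j) (hdense : DenseRange j)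
    (hX : ∀ α : X →L[ℂ] ℂ,
      DistSupport ((α.comp j).comp
          (SchwartzMap.fourierTransformCLM ℂ : SchwartzMap ℝ ℂ →L[ℂ] SchwartzMap ℝ ℂ)) ⊆
        Set.range (Int.cast : ℤ → ℝ) → α = 0) :
    Dense (⇑j '' (⇑(SchwartzMap.fourierTransformCLM ℂ : SchwartzMap ℝ ℂ →L[ℂ] SchwartzMap ℝ ℂ)
      '' I0)) :=
  fourier_I0_dense_general X j hX
end

section
/- Partition the positive integers into countably many pairwise disjoint infinite sets S_1, S_2, … such that for every r, limsup_{k→∞} #(S_r ∩ [1,k])/k = 1. Such a partition exists. -/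
open Filter

private def pIdx (n : ℕ) : ℕ := Nat.findGreatest (fun m => Nat.factorial m < n) n

private def pS (r : ℕ) : Set ℕ := {n | 0 < n ∧ (Nat.unpair (pIdx n)).1 = r}

private lemma pIdx_eq {m n : ℕ} (h1 : m.factorial < n) (h2 : n ≤ (m+1).factorial) :
    pIdx n = m := by
  have hmn : m ≤ n := le_trans (Nat.self_le_factorial m) (le_of_lt h1)
  refine (Nat.findGreatest_eq_iff).2 ⟨hmn, fun _ => h1, ?_⟩
  intro n' hn' _ hP
  have : (m+1).factorial ≤ n'.factorial := Nat.factorial_le (by omega)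
  omega

private lemma block_mem {m n r : ℕ} (hf : (Nat.unpair m).1 = r)
    (h1 : m.factorial < n) (h2 : n ≤ (m+1).factorial) : n ∈ pS r := by
  refine ⟨by have := Nat.factorial_pos m; omega, ?_⟩
  rw [pIdx_eq h1 h2, hf]

/-- The positive integers can be partitioned into countably many pairwise disjoint
infinite sets `S_1, S_2, …` each of upper density `1`:
`limsup_{k→∞} #(S_r ∩ [1,k]) / k = 1` for every `r`. -/
theorem exists_partition_upper_density_one :
    ∃ S : ℕ → Set ℕ,
      (∀ r : ℕ, (S r).Infinite) ∧
      Pairwise (Function.onFun Disjoint S) ∧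
      (⋃ r : ℕ, S r) = {n : ℕ | 0 < n} ∧
      ∀ r : ℕ, Filter.limsup
        (fun k : ℕ => ((S r ∩ Set.Icc 1 k).ncard : ℝ) / k) atTop = 1 := by
  refine ⟨pS, ?_, ?_, ?_, ?_⟩
  · -- infinite
    intro r
    apply Set.infinite_of_not_bddAbove
    rintro ⟨b, hb⟩
    set m := Nat.pair r (max 1 b) with hm
    have hmb : max 1 b ≤ m := Nat.right_le_pair _ _
    have h1 : m.factorial < m.factorial + 1 := lt_add_one _
    have h2 : m.factorial + 1 ≤ (m+1).factorial := by
      have h3 : 1 ≤ m := le_trans (le_max_left _ _) hmb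
      have : (m+1) * m.factorial = (m+1).factorial := (Nat.factorial_succ m).symm
      nlinarith [Nat.factorial_pos m]
    have hmem : m.factorial + 1 ∈ pS r := block_mem (by simp [hm]) h1 h2
    have := hb hmem
    have := Nat.self_le_factorial m
    omega
  · -- pairwise disjoint
    intro i j hij
    rw [Function.onFun, Set.disjoint_left]
    rintro n ⟨_, hi⟩ ⟨_, hj⟩
    exact hij (hi ▸ hj ▸ rfl)
  · -- union
    ext n
    simp only [Set.mem_iUnion, Set.mem_setOf_eq]
    constructor
    · rintro ⟨r, hr, _⟩; exact hr
    · intro hn; exact ⟨(Nat.unpair (pIdx n)).1, hn, rfl⟩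
  · -- limsup
    intro r
    set u : ℕ → ℝ := fun k => ((pS r ∩ Set.Icc 1 k).ncard : ℝ) / k with hu
    have hnonneg : ∀ k, 0 ≤ u k := fun k => by positivity
    have hle1 : ∀ k, u k ≤ 1 := by
      intro k
      rcases Nat.eq_zero_or_pos k with hk | hk
      · simp [hu, hk]
      · have hsub : pS r ∩ Set.Icc 1 k ⊆ Set.Icc 1 k := Set.inter_subset_right
        have hIcc : (Set.Icc (1:ℕ) k).ncard = k := by
          rw [← Finset.coe_Icc, Set.ncard_coe_finset, Nat.card_Icc]; omega
        have hcard : (pS r ∩ Set.Icc 1 k).ncard ≤ k :=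
          le_of_le_of_eq (Set.ncard_le_ncard hsub (Set.finite_Icc 1 k)) hIcc
        have hkpos : (0:ℝ) < k := by exact_mod_cast hk
        rw [hu]
        rw [div_le_one hkpos]
        exact_mod_cast hcard
    have hbdd : IsBoundedUnder (· ≤ ·) atTop u :=
      isBoundedUnder_of_eventually_le (Eventually.of_forall hle1)
    have hcobdd : IsCoboundedUnder (· ≤ ·) atTop u :=
      isCoboundedUnder_le_of_le atTop hnonneg
    have hfreq : ∀ a : ℝ, a < 1 → ∃ᶠ k in atTop, a ≤ u k := by
      intro a ha
      rw [frequently_atTop]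
      intro N
      obtain ⟨c, hc⟩ := exists_nat_one_div_lt (by linarith : (0:ℝ) < 1 - a)
      set m := Nat.pair r (max 1 (max N c)) with hm
      have hmN : max 1 (max N c) ≤ m := Nat.right_le_pair _ _
      have hm0 : 1 ≤ m := le_trans (le_max_left _ _) hmN
      set k := (m+1).factorial with hk
      have hmk : m + 1 ≤ k := Nat.self_le_factorial _
      have hNm : N ≤ m := le_trans (le_trans (le_max_left N c) (le_max_right 1 _)) hmN
      refine ⟨k, by omega, ?_⟩
      have hmfk : m.factorial ≤ k := Nat.factorial_le (by omega)
      have hmfk' : m.factorial < k := by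
        rw [hk, Nat.factorial_succ]
        have := Nat.factorial_pos m
        nlinarith [hm0]
      have hsub : Set.Ioc m.factorial k ⊆ pS r ∩ Set.Icc 1 k := by
        rintro n ⟨hn1, hn2⟩
        refine ⟨block_mem (by simp [hm]) hn1 hn2, ?_, hn2⟩
        have := Nat.factorial_pos m; omega
      have hfin : (pS r ∩ Set.Icc 1 k).Finite :=
        (Set.finite_Icc 1 k).subset Set.inter_subset_right
      have hcard : k - m.factorial ≤ (pS r ∩ Set.Icc 1 k).ncard := by
        have := Set.ncard_le_ncard hsub hfin
        rwa [← Finset.coe_Ioc, Set.ncard_coe_finset, Nat.card_Ioc] at this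
      have hkpos : (0:ℝ) < k := by exact_mod_cast Nat.factorial_pos _
      have hfne : (m.factorial:ℝ) ≠ 0 := by exact_mod_cast (Nat.factorial_pos m).ne'
      have hm1 : ((m:ℝ) + 1) ≠ 0 := by positivity
      have key : ((k:ℝ) - m.factorial) / k = 1 - 1/(m+1) := by
        have hkr : (k:ℝ) = ((m:ℝ)+1) * m.factorial := by
          rw [hk, Nat.factorial_succ]; push_cast; ring
        rw [hkr]
        field_simp
      have ha2 : a ≤ 1 - 1/((m:ℝ)+1) := by
        have hcm : (c:ℝ) + 1 ≤ (m:ℝ) + 1 := by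
          have : c ≤ m := le_trans (le_trans (le_max_right N c) (le_max_right 1 _)) hmN
          exact_mod_cast Nat.succ_le_succ this
        have h1 : 1/((m:ℝ)+1) ≤ 1/((c:ℝ)+1) :=
          one_div_le_one_div_of_le (by positivity) hcm
        linarith
      have hnum : ((k:ℝ) - m.factorial) ≤ ((pS r ∩ Set.Icc 1 k).ncard : ℝ) := by
        rw [← Nat.cast_sub hmfk]
        exact_mod_cast hcard
      calc a ≤ ((k:ℝ) - m.factorial) / k := by rw [key]; exact ha2
        _ ≤ u k := by rw [hu]; exact div_le_div_of_nonneg_right hnum hkpos.le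
    refine le_antisymm (limsup_le_of_le hcobdd (Eventually.of_forall hle1)) ?_
    refine le_of_forall_lt ?_
    intro a ha
    have h2 : (a+1)/2 < 1 := by linarith
    have h3 : a < (a+1)/2 := by linarith
    exact lt_of_lt_of_le h3 (le_limsup_of_frequently_le (hfreq _ h2) hbdd)
end
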